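/- arXiv:1105.1384 — 9 statements merged into one kernel-verified Lean document; each statement's English description precedes it below -/
import Mathlib

section
/- Let α > 0 and define f : ℝ → ℝ by f(t) = (1 − t^α)^(1/α). Then for all x, y ∈ (0, 1] with x^α + y^α ≥ 1, one has x · f(f(y)/x) = y · f(f(x)/y), and both sides equal (x^α + y^α − 1)^(1/α). -/
/-- The function appearing in Cox's derivation of the sum rule:
`f t = (1 - t^α)^(1/α)` (real powers). -/
noncomputable def coxF (α : ℝ) (t : ℝ) : ℝ := (1 - t ^ α) ^ (1 / α)

lemma coxF_key (α : ℝ) (hα : 0 < α) (x y : ℝ)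
    (hx : x ∈ Set.Ioc (0 : ℝ) 1) (hy : y ∈ Set.Ioc (0 : ℝ) 1)
    (hxy : 1 ≤ x ^ α + y ^ α) :
    x * coxF α (coxF α y / x) = (x ^ α + y ^ α - 1) ^ (1 / α) := by
  obtain ⟨hx0, hx1⟩ := hx
  obtain ⟨hy0, hy1⟩ := hy
  have hyα : y ^ α ≤ 1 := by
    calc y ^ α ≤ 1 ^ α := Real.rpow_le_rpow hy0.le hy1 hα.le
    _ = 1 := Real.one_rpow α
  have h1 : (0:ℝ) ≤ 1 - y ^ α := by linarith
  have hxα : (0:ℝ) < x ^ α := Real.rpow_pos_of_pos hx0 α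
  have hne : α ≠ 0 := hα.ne'
  have hpow : ((1 - y ^ α) ^ (1 / α)) ^ α = 1 - y ^ α := by
    rw [← Real.rpow_mul h1, one_div, inv_mul_cancel₀ hne, Real.rpow_one]
  have hquot : (coxF α y / x) ^ α = (1 - y ^ α) / x ^ α := by
    rw [coxF, Real.div_rpow (Real.rpow_nonneg h1 _) hx0.le, hpow]
  have h2 : 1 - (1 - y ^ α) / x ^ α = (x ^ α + y ^ α - 1) / x ^ α := by
    field_simp
    ring
  have h3 : (0:ℝ) ≤ x ^ α + y ^ α - 1 := by linarith
  rw [coxF, hquot, h2, Real.div_rpow h3 hxα.le,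
    ← Real.rpow_mul hx0.le, mul_one_div, div_self hne, Real.rpow_one]
  field_simp

/-- `f t = (1 - t^α)^(1/α)` solves the functional equation
`x · f(f(y)/x) = y · f(f(x)/y)`, and both sides equal `(x^α + y^α − 1)^(1/α)`. -/
theorem coxF_solves_functional_equation (α : ℝ) (hα : 0 < α)
    (x y : ℝ) (hx : x ∈ Set.Ioc (0 : ℝ) 1) (hy : y ∈ Set.Ioc (0 : ℝ) 1)
    (hxy : 1 ≤ x ^ α + y ^ α) :
    x * coxF α (coxF α y / x) = y * coxF α (coxF α x / y) ∧
      x * coxF α (coxF α y / x) = (x ^ α + y ^ α - 1) ^ (1 / α) ∧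
      y * coxF α (coxF α x / y) = (x ^ α + y ^ α - 1) ^ (1 / α) := by
  have h1 := coxF_key α hα x y hx hy hxy
  have h2 := coxF_key α hα y x hy hx (by linarith)
  rw [add_comm (y^α)] at h2
  exact ⟨h1.trans h2.symm, h1, h2⟩
end

section
/- Let ι be a nonempty finite type, let r ∈ ℕ, let f : Fin r → ι → ℝ be constraint functions and λ : Fin r → ℝ Lagrange multipliers. Define the partition function Z = ∑ i, exp(−∑ k, λ k * f k i) and the canonical distribution p i = exp(−∑ k, λ k * f k i) / Z. Then for every probability distribution q on ι satisfying the same expectation constraints, i.e. ∑ i, q i * f k i = ∑ i, p i * f k i for all k, one has H(q) = −∑ i, q i * log (q i) ≤ −∑ i, p i * log (p i) = H(p), with equality if and only if q = p. -/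
open Finset

/-- Jaynes's principle of maximum entropy: the canonical (Gibbs) distribution
`p i = exp(−∑ k, λ k * f k i) / Z`, with `Z` the partition function, maximizes the
Shannon entropy among all probability distributions `q` satisfying the same
expectation-value constraints `∑ i, q i * f k i = ∑ i, p i * f k i`, with equality
if and only if `q = p`. -/
theorem canonical_distribution_maximizes_entropy {ι : Type*} [Fintype ι] [Nonempty ι]
    (r : ℕ) (f : Fin r → ι → ℝ) (lam : Fin r → ℝ)
    (Z : ℝ) (hZ : Z = ∑ i, Real.exp (-∑ k, lam k * f k i))
    (p : ι → ℝ) (hp : ∀ i, p i = Real.exp (-∑ k, lam k * f k i) / Z)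
    (q : ι → ℝ) (hq0 : ∀ i, 0 ≤ q i) (hq1 : ∑ i, q i = 1)
    (hconstr : ∀ k, ∑ i, q i * f k i = ∑ i, p i * f k i) :
    (-∑ i, q i * Real.log (q i) ≤ -∑ i, p i * Real.log (p i)) ∧
      (-∑ i, q i * Real.log (q i) = -∑ i, p i * Real.log (p i) ↔ q = p) := by
  have hZpos : 0 < Z := by
    rw [hZ]
    exact Finset.sum_pos (fun i _ => Real.exp_pos _) univ_nonempty
  have hppos : ∀ i, 0 < p i := fun i => by
    rw [hp]; exact div_pos (Real.exp_pos _) hZpos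
  have hpsum : ∑ i, p i = 1 := by
    simp_rw [hp]
    rw [← Finset.sum_div, ← hZ, div_self hZpos.ne']
  have hlogp : ∀ i, Real.log (p i) = (-∑ k, lam k * f k i) - Real.log Z := fun i => by
    rw [hp, Real.log_div (Real.exp_ne_zero _) hZpos.ne', Real.log_exp]
  have hswap : ∀ g : ι → ℝ, ∑ i, g i * (∑ k, lam k * f k i)
      = ∑ k, lam k * ∑ i, g i * f k i := by
    intro g
    simp_rw [Finset.mul_sum]
    rw [Finset.sum_comm]
    exact Finset.sum_congr rfl fun k _ => Finset.sum_congr rfl fun i _ => by ring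
  have hcross : ∑ i, q i * Real.log (p i) = ∑ i, p i * Real.log (p i) := by
    simp_rw [hlogp, mul_sub, mul_neg]
    rw [Finset.sum_sub_distrib, Finset.sum_sub_distrib, ← Finset.sum_mul, ← Finset.sum_mul,
        hq1, hpsum]
    congr 1
    rw [Finset.sum_neg_distrib, Finset.sum_neg_distrib, neg_inj, hswap, hswap]
    exact Finset.sum_congr rfl fun k _ => by rw [hconstr k]
  have hgibbs : ∀ i, q i * (Real.log (p i) - Real.log (q i)) ≤ p i - q i := by
    intro i
    rcases (hq0 i).eq_or_lt with h | h
    · rw [← h]; simpa using (hppos i).le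
    · have hlog := Real.log_le_sub_one_of_pos (div_pos (hppos i) h)
      rw [Real.log_div (hppos i).ne' h.ne'] at hlog
      have h2 : q i * (p i / q i - 1) = p i - q i := by field_simp
      calc q i * (Real.log (p i) - Real.log (q i)) ≤ q i * (p i / q i - 1) :=
            mul_le_mul_of_nonneg_left hlog h.le
        _ = p i - q i := h2
  have hexp : ∑ i, q i * (Real.log (p i) - Real.log (q i))
      = ∑ i, p i * Real.log (p i) - ∑ i, q i * Real.log (q i) := by
    simp_rw [mul_sub]
    rw [Finset.sum_sub_distrib, hcross]
  have hbound : ∑ i, (p i - q i) = 0 := by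
    rw [Finset.sum_sub_distrib, hpsum, hq1, sub_self]
  have hsum : ∑ i, q i * (Real.log (p i) - Real.log (q i)) ≤ 0 := by
    calc ∑ i, q i * (Real.log (p i) - Real.log (q i)) ≤ ∑ i, (p i - q i) :=
          Finset.sum_le_sum fun i _ => hgibbs i
      _ = 0 := hbound
  constructor
  · linarith [hexp ▸ hsum]
  · constructor
    · intro heq
      have hsum0 : ∑ i, q i * (Real.log (p i) - Real.log (q i)) = ∑ i, (p i - q i) := by
        rw [hexp, hbound]; linarith
      have hall := (Finset.sum_eq_sum_iff_of_le (fun i _ => hgibbs i)).mp hsum0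
      funext i
      have hi := hall i (mem_univ i)
      rcases (hq0 i).eq_or_lt with h | h
      · exfalso
        rw [← h] at hi
        simp at hi
        exact (hppos i).ne' hi.symm
      · by_contra hne
        have hdiv : p i / q i ≠ 1 := by
          intro hc
          exact hne ((div_eq_one_iff_eq h.ne').mp hc).symm
        have hlog := Real.log_lt_sub_one_of_pos (div_pos (hppos i) h) hdiv
        rw [Real.log_div (hppos i).ne' h.ne'] at hlog
        have h2 : q i * (p i / q i - 1) = p i - q i := by field_simp
        have : q i * (Real.log (p i) - Real.log (q i)) < p i - q i := by
          calc q i * (Real.log (p i) - Real.log (q i)) < q i * (p i / q i - 1) :=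
                mul_lt_mul_of_pos_left hlog h
            _ = p i - q i := h2
        linarith [hi]
    · intro heq
      rw [heq]
end

section
/- Let Θ and 𝒟 be finite types, let q be a probability distribution on Θ × 𝒟 with q(θ,d) > 0 for all (θ,d), and fix D ∈ 𝒟. Let q_D = ∑ θ, q(θ,D) (so q_D > 0) and define p*(θ,d) = q(θ,D)/q_D if d = D and p*(θ,d) = 0 otherwise. Then for every probability distribution p on Θ × 𝒟 satisfying p(θ,d) = 0 whenever d ≠ D, the relative entropy satisfies S[p,q] = −∑ (θ,d), p(θ,d) * log (p(θ,d) / q(θ,d)) ≤ S[p*,q] = log q_D, with equality if and only if p = p*. -/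
/-!
Conditioning on `d = D` collapses the relative entropy of any `p` supported on the slice
`d = D` to a divergence on `Θ` alone: with `c θ = q(θ,D)/q_D`,
`S[p,q] = log q_D - ∑ θ, p(θ,D) log (p(θ,D)/c θ)`.
Gibbs' inequality, in the form `a log (a/c) = a - c + c · klFun (a/c)` with `klFun ≥ 0`
vanishing only at `1`, makes the divergence nonnegative and zero exactly when the slice
of `p` is `c`, i.e. when `p = p*`.
-/

open Finset Real InformationTheory

lemma mul_log_div_eq_sub_add_mul_klFun (a : ℝ) {c : ℝ} (hc : c ≠ 0) :
    a * log (a / c) = a - c + c * klFun (a / c) := by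
  rw [klFun_apply]
  field_simp
  ring

lemma mul_log_div_div (a : ℝ) {c s : ℝ} (hc : c ≠ 0) (hs : s ≠ 0) :
    a * log (a / (c / s)) = a * log (a / c) + a * log s := by
  rcases eq_or_ne a 0 with rfl | ha
  · simp
  · rw [div_div_eq_mul_div, mul_div_right_comm, log_mul (div_ne_zero ha hc) hs]
    ring

section Gibbs

variable {ι : Type*} [Fintype ι] {a c : ι → ℝ}

lemma sum_mul_log_div_eq_sum_mul_klFun (hc : ∀ i, 0 < c i) (hsum : ∑ i, a i = ∑ i, c i) :
    ∑ i, a i * log (a i / c i) = ∑ i, c i * klFun (a i / c i) := by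
  simp only [mul_log_div_eq_sub_add_mul_klFun _ (hc _).ne', sum_add_distrib, sum_sub_distrib,
    hsum, sub_self, zero_add]

lemma sum_mul_log_div_nonneg (ha : ∀ i, 0 ≤ a i) (hc : ∀ i, 0 < c i)
    (hsum : ∑ i, a i = ∑ i, c i) : 0 ≤ ∑ i, a i * log (a i / c i) := by
  rw [sum_mul_log_div_eq_sum_mul_klFun hc hsum]
  exact sum_nonneg fun i _ => mul_nonneg (hc i).le (klFun_nonneg (div_nonneg (ha i) (hc i).le))

lemma sum_mul_log_div_eq_zero_iff (ha : ∀ i, 0 ≤ a i) (hc : ∀ i, 0 < c i)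
    (hsum : ∑ i, a i = ∑ i, c i) : ∑ i, a i * log (a i / c i) = 0 ↔ a = c := by
  have hterm (i : ι) : 0 ≤ c i * klFun (a i / c i) :=
    mul_nonneg (hc i).le (klFun_nonneg (div_nonneg (ha i) (hc i).le))
  rw [sum_mul_log_div_eq_sum_mul_klFun hc hsum,
    sum_eq_zero_iff_of_nonneg fun i _ => hterm i, funext_iff]
  refine forall_congr' fun i => ?_
  rw [mul_eq_zero_iff_left (hc i).ne', klFun_eq_zero_iff (div_nonneg (ha i) (hc i).le),
    div_eq_one_iff_eq (hc i).ne']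
  simp

end Gibbs

section Slice

variable {Θ 𝒟 : Type*} {D : 𝒟}

lemma sum_eq_sum_slice_of_supported [Fintype Θ] [Fintype 𝒟] {M : Type*} [AddCommMonoid M] {g : Θ × 𝒟 → M}
    (hg : ∀ θ d, d ≠ D → g (θ, d) = 0) : ∑ z, g z = ∑ θ, g (θ, D) := by
  rw [Fintype.sum_prod_type]
  exact sum_congr rfl fun θ _ => sum_eq_single D (fun d _ hd => hg θ d hd) (by simp)

lemma eq_iff_slice_eq_of_supported {f g : Θ × 𝒟 → ℝ}
    (hf : ∀ θ d, d ≠ D → f (θ, d) = 0) (hg : ∀ θ d, d ≠ D → g (θ, d) = 0) :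
    f = g ↔ (fun θ => f (θ, D)) = fun θ => g (θ, D) := by
  refine ⟨fun h => h ▸ rfl, fun h => funext fun ⟨θ, d⟩ => ?_⟩
  rcases eq_or_ne d D with rfl | hd
  · exact congrFun h θ
  · rw [hf θ d hd, hg θ d hd]

lemma sum_mul_log_div_of_supported [Fintype Θ] [Fintype 𝒟] {f q : Θ × 𝒟 → ℝ} {s : ℝ}
    (hf : ∀ θ d, d ≠ D → f (θ, d) = 0) (hf1 : ∑ θ, f (θ, D) = 1)
    (hq : ∀ θ, q (θ, D) ≠ 0) (hs : s ≠ 0) :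
    ∑ z, f z * log (f z / q z) = ∑ θ, f (θ, D) * log (f (θ, D) / (q (θ, D) / s)) - log s := by
  rw [sum_eq_sum_slice_of_supported (D := D) fun θ d hd => by simp [hf θ d hd]]
  simp only [mul_log_div_div _ (hq _) hs, sum_add_distrib, ← sum_mul, hf1, one_mul,
    add_sub_cancel_right]

end Slice

theorem bayes_rule_is_max_entropy_general {Θ 𝒟 : Type*} [Fintype Θ] [Fintype 𝒟] [DecidableEq 𝒟]
    (q : Θ × 𝒟 → ℝ) (hq0 : ∀ z, 0 < q z)
    (D : 𝒟) (qD : ℝ) (hqD : qD = ∑ θ, q (θ, D))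
    (pstar : Θ × 𝒟 → ℝ)
    (hpstar : ∀ θ d, pstar (θ, d) = if d = D then q (θ, D) / qD else 0)
    (p : Θ × 𝒟 → ℝ) (hp0 : ∀ z, 0 ≤ p z) (hp1 : ∑ z, p z = 1)
    (hsupp : ∀ θ d, d ≠ D → p (θ, d) = 0) :
    (-∑ z, p z * Real.log (p z / q z) ≤ -∑ z, pstar z * Real.log (pstar z / q z)) ∧
      (-∑ z, pstar z * Real.log (pstar z / q z) = Real.log qD) ∧
      (-∑ z, p z * Real.log (p z / q z) = -∑ z, pstar z * Real.log (pstar z / q z)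
        ↔ p = pstar) := by
  have hp1' : ∑ θ, p (θ, D) = 1 := by rwa [← sum_eq_sum_slice_of_supported hsupp]
  have hqD_pos : 0 < qD := hqD ▸ sum_pos (fun θ _ => hq0 (θ, D))
    (nonempty_of_sum_ne_zero (hp1' ▸ one_ne_zero))
  set c : Θ → ℝ := fun θ => q (θ, D) / qD
  have hc0 (θ : Θ) : 0 < c θ := div_pos (hq0 (θ, D)) hqD_pos
  have hc1 : ∑ θ, c θ = 1 := by rw [← sum_div, ← hqD, div_self hqD_pos.ne']
  have hpstar_supp (θ : Θ) (d : 𝒟) (hd : d ≠ D) : pstar (θ, d) = 0 := by rw [hpstar, if_neg hd]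
  have hpstar_slice : (fun θ => pstar (θ, D)) = c := funext fun θ => by simp [hpstar, c]
  have hS : ∑ z, p z * log (p z / q z) = ∑ θ, p (θ, D) * log (p (θ, D) / c θ) - log qD :=
    sum_mul_log_div_of_supported hsupp hp1' (fun θ => (hq0 (θ, D)).ne') hqD_pos.ne'
  have hSstar : ∑ z, pstar z * log (pstar z / q z) = -log qD := by
    rw [sum_mul_log_div_of_supported hpstar_supp (by simp only [hpstar_slice, hc1])
      (fun θ => (hq0 (θ, D)).ne') hqD_pos.ne']
    simp [hpstar, c, div_self (hc0 _).ne']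
  have hgibbs := sum_mul_log_div_nonneg (fun θ => hp0 (θ, D)) hc0 (hp1'.trans hc1.symm)
  have hgibbs_eq := sum_mul_log_div_eq_zero_iff (fun θ => hp0 (θ, D)) hc0 (hp1'.trans hc1.symm)
  refine ⟨by linarith, by rw [hSstar, neg_neg], ?_⟩
  rw [eq_iff_slice_eq_of_supported hsupp hpstar_supp, hpstar_slice, ← hgibbs_eq, hS, hSstar]
  constructor <;> intro h <;> linarith

/-- The Caticha–Giffin result that Bayes' rule is a special case of maximum entropy
updating: among all joint posteriors `p` on `Θ × 𝒟` supported on the observed datum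
`D`, the relative entropy `S[p,q]` relative to the (strictly positive) prior `q` is
maximized exactly by `p*(θ,d) = δ_{dD} · q(θ,D)/q_D`, and the maximal value is
`log q_D` where `q_D = ∑ θ, q(θ,D)`. -/
theorem bayes_rule_is_max_entropy {Θ 𝒟 : Type*} [Fintype Θ] [Fintype 𝒟] [DecidableEq 𝒟]
    (q : Θ × 𝒟 → ℝ) (hq0 : ∀ z, 0 < q z) (hq1 : ∑ z, q z = 1)
    (D : 𝒟) (qD : ℝ) (hqD : qD = ∑ θ, q (θ, D))
    (pstar : Θ × 𝒟 → ℝ)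
    (hpstar : ∀ θ d, pstar (θ, d) = if d = D then q (θ, D) / qD else 0)
    (p : Θ × 𝒟 → ℝ) (hp0 : ∀ z, 0 ≤ p z) (hp1 : ∑ z, p z = 1)
    (hsupp : ∀ θ d, d ≠ D → p (θ, d) = 0) :
    (-∑ z, p z * Real.log (p z / q z) ≤ -∑ z, pstar z * Real.log (pstar z / q z)) ∧
      (-∑ z, pstar z * Real.log (pstar z / q z) = Real.log qD) ∧
      (-∑ z, p z * Real.log (p z / q z) = -∑ z, pstar z * Real.log (pstar z / q z)
        ↔ p = pstar) :=
  bayes_rule_is_max_entropy_general q hq0 D qD hqD pstar hpstar p hp0 hp1 hsupp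
end

section
/- Let p : ℝ → ℝ be a measurable function with p(x) ≥ 0 for all x, ∫ p(x) dx = 1, ∫ x · p(x) dx = x̄, and ∫ (x − x̄)² · p(x) dx = σ² with σ > 0, and suppose x ↦ p(x) * log (p(x)) is integrable. Then the differential entropy satisfies −∫ p(x) * log (p(x)) dx ≤ 1/2 + log (√(2πσ²)). Moreover, the Gaussian density g(x) = (2πσ²)^(−1/2) · exp(−(x − x̄)²/(2σ²)) satisfies all the hypotheses and attains equality: −∫ g(x) * log (g(x)) dx = 1/2 + log (√(2πσ²)). -/
/-!
Integrating the pointwise Gibbs inequality `p - g ≤ p (log p - log g)`, a consequence of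
`log t ≤ t - 1`, gives `-∫ p log p ≤ -∫ p log g` for the Gaussian density `g` with the same
variance. Since `log g` is a quadratic polynomial in `x - x̄`, the cross entropy `-∫ p log g`
only sees the mass and the variance of `p`, so it takes the same value for `p` as for `g`
itself, namely `1/2 + log √(2πσ²)`.
-/

open MeasureTheory

/-- The Gaussian density `g(x) = (2πσ²)^(−1/2) · exp(−(x − xbar)²/(2σ²))`. -/
noncomputable def gaussDensity (xbar σ : ℝ) (x : ℝ) : ℝ :=
  (2 * Real.pi * σ ^ 2) ^ (-(1 : ℝ) / 2) * Real.exp (-(x - xbar) ^ 2 / (2 * σ ^ 2))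

open Real ProbabilityTheory
open scoped NNReal

lemma Real.sub_le_mul_log_sub_log {x y : ℝ} (hx : 0 ≤ x) (hy : 0 < y) :
    x - y ≤ x * (log x - log y) := by
  rcases hx.eq_or_lt with rfl | hx
  · simpa using hy.le
  have h := log_le_sub_one_of_pos (div_pos hy hx)
  rw [log_div hy.ne' hx.ne'] at h
  have h' := mul_le_mul_of_nonneg_left h hx.le
  have hxy : x * (y / x - 1) = y - x := by field_simp
  linarith

theorem integral_mul_log_le_integral_mul_log {α : Type*} [MeasurableSpace α] {μ : Measure α}
    {p q : α → ℝ} (hp0 : ∀ x, 0 ≤ p x) (hq0 : ∀ x, 0 < q x) (hp : Integrable p μ)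
    (hq : Integrable q μ) (hplogp : Integrable (fun x ↦ p x * log (p x)) μ)
    (hplogq : Integrable (fun x ↦ p x * log (q x)) μ) (hpq : ∫ x, q x ∂μ ≤ ∫ x, p x ∂μ) :
    ∫ x, p x * log (q x) ∂μ ≤ ∫ x, p x * log (p x) ∂μ := by
  have h : ∫ x, (p x - q x) ∂μ ≤ ∫ x, (p x * log (p x) - p x * log (q x)) ∂μ :=
    integral_mono (hp.sub hq) (hplogp.sub hplogq) fun x ↦
    (sub_le_mul_log_sub_log (hp0 x) (hq0 x)).trans_eq (mul_sub _ _ _)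
  rw [integral_sub hp hq, integral_sub hplogp hplogq] at h
  linarith

namespace ProbabilityTheory

lemma log_gaussianPDFReal (μ : ℝ) {v : ℝ≥0} (hv : v ≠ 0) (x : ℝ) :
    log (gaussianPDFReal μ v x) = -log √(2 * π * v) - (x - μ) ^ 2 / (2 * v) := by
  have hpos : 0 < √(2 * π * v) := by positivity
  rw [gaussianPDFReal, log_mul (inv_pos.2 hpos).ne' (exp_pos _).ne', log_inv, log_exp]
  ring

lemma integral_mul_gaussianPDFReal (μ : ℝ) {v : ℝ≥0} (hv : v ≠ 0) :
    ∫ x, x * gaussianPDFReal μ v x = μ := by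
  simpa [integral_gaussianReal_eq_integral_smul hv, mul_comm] using
    integral_id_gaussianReal (μ := μ) (v := v)

lemma integral_sq_sub_mul_gaussianPDFReal (μ : ℝ) (v : ℝ≥0) :
    ∫ x, (x - μ) ^ 2 * gaussianPDFReal μ v x = v := by
  rcases eq_or_ne v 0 with rfl | hv
  · simp
  have h := variance_fun_id_gaussianReal (μ := μ) (v := v)
  rw [variance_eq_integral measurable_id'.aemeasurable, integral_id_gaussianReal,
    integral_gaussianReal_eq_integral_smul hv] at h
  simpa [mul_comm] using h

lemma integrable_mul_log_gaussianPDFReal {f : ℝ → ℝ} (μ : ℝ) {v : ℝ≥0} (hv : v ≠ 0)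
    (hf : Integrable f) (hf2 : Integrable fun x ↦ (x - μ) ^ 2 * f x) :
    Integrable fun x ↦ f x * log (gaussianPDFReal μ v x) := by
  refine ((hf.const_mul (-log √(2 * π * v))).sub (hf2.div_const (2 * v))).congr
    (.of_forall fun x ↦ ?_)
  simp only [Pi.sub_apply, log_gaussianPDFReal μ hv]
  ring

lemma integral_mul_log_gaussianPDFReal {f : ℝ → ℝ} (μ : ℝ) {v : ℝ≥0} (hv : v ≠ 0)
    (hf : ∫ x, f x = 1) (hf2 : ∫ x, (x - μ) ^ 2 * f x = v) :
    ∫ x, f x * log (gaussianPDFReal μ v x) = -(1 / 2 + log √(2 * π * v)) := by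
  have hv' : (v : ℝ) ≠ 0 := by exact_mod_cast hv
  have hfi : Integrable f := .of_integral_ne_zero (by simp [hf])
  have hf2i : Integrable fun x ↦ (x - μ) ^ 2 * f x := .of_integral_ne_zero (by simp [hf2, hv])
  have hpt : ∀ x, f x * log (gaussianPDFReal μ v x)
      = -log √(2 * π * v) * f x - (x - μ) ^ 2 * f x / (2 * v) := fun x ↦ by
    rw [log_gaussianPDFReal μ hv]; ring
  simp only [hpt]
  rw [integral_sub (hfi.const_mul _) (hf2i.div_const _), integral_const_mul, integral_div, hf, hf2]
  field_simp
  ring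

lemma neg_integral_mul_log_gaussianPDFReal (μ : ℝ) {v : ℝ≥0} (hv : v ≠ 0) :
    -∫ x, gaussianPDFReal μ v x * log (gaussianPDFReal μ v x) = 1 / 2 + log √(2 * π * v) := by
  rw [integral_mul_log_gaussianPDFReal μ hv (integral_gaussianPDFReal_eq_one μ hv)
    (integral_sq_sub_mul_gaussianPDFReal μ v), neg_neg]

theorem neg_integral_mul_log_le_of_integral_sq_sub_mul {p : ℝ → ℝ} (μ : ℝ) {v : ℝ≥0}
    (hv : v ≠ 0) (hp0 : ∀ x, 0 ≤ p x) (hp1 : ∫ x, p x = 1)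
    (hvar : ∫ x, (x - μ) ^ 2 * p x = v) (hint : Integrable fun x ↦ p x * log (p x)) :
    -∫ x, p x * log (p x) ≤ 1 / 2 + log √(2 * π * v) := by
  have hpi : Integrable p := .of_integral_ne_zero (by simp [hp1])
  have hp2i : Integrable fun x ↦ (x - μ) ^ 2 * p x := .of_integral_ne_zero (by simp [hvar, hv])
  have hgibbs := integral_mul_log_le_integral_mul_log hp0 (gaussianPDFReal_pos μ v · hv) hpi
    (integrable_gaussianPDFReal μ v) hint (integrable_mul_log_gaussianPDFReal μ hv hpi hp2i)
    (by rw [integral_gaussianPDFReal_eq_one μ hv, hp1])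
  rw [integral_mul_log_gaussianPDFReal μ hv hp1 hvar] at hgibbs
  linarith

end ProbabilityTheory

lemma gaussDensity_eq_gaussianPDFReal (xbar σ : ℝ) :
    gaussDensity xbar σ = gaussianPDFReal xbar ⟨σ ^ 2, sq_nonneg σ⟩ := by
  ext x
  rw [gaussDensity, neg_div, rpow_neg (by positivity), ← sqrt_eq_rpow]
  rfl

theorem gaussian_maximizes_differential_entropy_general
    (xbar σ : ℝ) (hσ : 0 < σ)
    (p : ℝ → ℝ) (hp0 : ∀ x, 0 ≤ p x)
    (hp1 : ∫ x, p x = 1)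
    (hvar : ∫ x, (x - xbar) ^ 2 * p x = σ ^ 2)
    (hint : Integrable (fun x => p x * Real.log (p x))) :
    (-∫ x, p x * Real.log (p x) ≤ 1 / 2 + Real.log (Real.sqrt (2 * Real.pi * σ ^ 2))) ∧
      Measurable (gaussDensity xbar σ) ∧
      (∀ x, 0 ≤ gaussDensity xbar σ x) ∧
      (∫ x, gaussDensity xbar σ x = 1) ∧
      (∫ x, x * gaussDensity xbar σ x = xbar) ∧
      (∫ x, (x - xbar) ^ 2 * gaussDensity xbar σ x = σ ^ 2) ∧
      Integrable (fun x => gaussDensity xbar σ x * Real.log (gaussDensity xbar σ x)) ∧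
      (-∫ x, gaussDensity xbar σ x * Real.log (gaussDensity xbar σ x)
        = 1 / 2 + Real.log (Real.sqrt (2 * Real.pi * σ ^ 2))) := by
  rw [gaussDensity_eq_gaussianPDFReal]
  set v : ℝ≥0 := ⟨σ ^ 2, sq_nonneg σ⟩
  have hv : v ≠ 0 := ne_of_gt (show (0 : ℝ) < σ ^ 2 by positivity)
  have hgvar := integral_sq_sub_mul_gaussianPDFReal xbar v
  exact ⟨neg_integral_mul_log_le_of_integral_sq_sub_mul xbar hv hp0 hp1 hvar hint,
    measurable_gaussianPDFReal xbar v, gaussianPDFReal_nonneg xbar v,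
    integral_gaussianPDFReal_eq_one xbar hv,
    integral_mul_gaussianPDFReal xbar hv, hgvar,
    integrable_mul_log_gaussianPDFReal xbar hv (integrable_gaussianPDFReal xbar v)
      (.of_integral_ne_zero (by simp [hgvar, hv])),
    neg_integral_mul_log_gaussianPDFReal xbar hv⟩

/-- Among all probability densities on `ℝ` with mean `xbar` and variance `σ²`
(about `xbar`), the differential entropy `−∫ p log p` is at most
`1/2 + log √(2πσ²)`; moreover the Gaussian density satisfies all the hypotheses
and attains this bound. -/
theorem gaussian_maximizes_differential_entropy
    (xbar σ : ℝ) (hσ : 0 < σ)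
    (p : ℝ → ℝ) (hmeas : Measurable p) (hp0 : ∀ x, 0 ≤ p x)
    (hp1 : ∫ x, p x = 1)
    (hmean : ∫ x, x * p x = xbar)
    (hvar : ∫ x, (x - xbar) ^ 2 * p x = σ ^ 2)
    (hint : Integrable (fun x => p x * Real.log (p x))) :
    (-∫ x, p x * Real.log (p x) ≤ 1 / 2 + Real.log (Real.sqrt (2 * Real.pi * σ ^ 2))) ∧
      Measurable (gaussDensity xbar σ) ∧
      (∀ x, 0 ≤ gaussDensity xbar σ x) ∧
      (∫ x, gaussDensity xbar σ x = 1) ∧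
      (∫ x, x * gaussDensity xbar σ x = xbar) ∧
      (∫ x, (x - xbar) ^ 2 * gaussDensity xbar σ x = σ ^ 2) ∧
      Integrable (fun x => gaussDensity xbar σ x * Real.log (gaussDensity xbar σ x)) ∧
      (-∫ x, gaussDensity xbar σ x * Real.log (gaussDensity xbar σ x)
        = 1 / 2 + Real.log (Real.sqrt (2 * Real.pi * σ ^ 2))) :=
  gaussian_maximizes_differential_entropy_general xbar σ hσ p hp0 hp1 hvar hint
end

section
/- Let X and Y be finite types, let Q be a probability distribution on X × Y with Q(x,y) > 0 for all (x,y), and let ρ_Q(x) = ∑ y, Q(x,y) denote its X-marginal. Let ρ_D be a probability distribution on X, and define P*(x,y) = Q(x,y) · ρ_D(x) / ρ_Q(x). Then P* is a probability distribution on X × Y with X-marginal ρ_D, and for every probability distribution P on X × Y with ∑ y, P(x,y) = ρ_D(x) for all x, the relative entropy satisfies S[P,Q] = −∑ (x,y), P(x,y) * log (P(x,y) / Q(x,y)) ≤ S[P*,Q] = −∑ x, ρ_D(x) * log (ρ_D(x) / ρ_Q(x)), with equality if and only if P = P*. -/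
/-!
Conditioning on the `X`-marginal splits the divergence: for every `P` with `X`-marginal `ρD`,
`KL(P ‖ Q) = KL(P ‖ P*) + KL(ρD ‖ ρ_Q)`, the chain rule for the factorisations
`P = ρD · P(y|x)` and `Q = ρ_Q · Q(y|x)`. The second term does not depend on `P`, and by
Gibbs' inequality the first is nonnegative and vanishes only at `P = P*`.
-/

open Finset Real InformationTheory

noncomputable section

/-- The paper's relative entropy is `S[p,q] = -discreteKL p q`. -/
def discreteKL {ι : Type*} [Fintype ι] (p q : ι → ℝ) : ℝ := ∑ i, p i * log (p i / q i)

section Gibbs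

variable {p q : ℝ}

lemma mul_log_div_sub_sub_eq_mul_klFun (hq : 0 < q) :
    p * log (p / q) - (p - q) = q * klFun (p / q) := by
  rw [klFun_apply]
  field_simp
  ring

lemma sub_le_mul_log_div (hp : 0 ≤ p) (hq : 0 ≤ q) (hpq : q = 0 → p = 0) :
    p - q ≤ p * log (p / q) := by
  rcases hq.eq_or_lt with rfl | hq
  · simp [hpq rfl]
  · have := mul_log_div_sub_sub_eq_mul_klFun (p := p) hq
    nlinarith [klFun_nonneg (div_nonneg hp hq.le)]

lemma mul_log_div_eq_sub_iff (hp : 0 ≤ p) (hq : 0 ≤ q) (hpq : q = 0 → p = 0) :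
    p * log (p / q) = p - q ↔ p = q := by
  rcases hq.eq_or_lt with rfl | hq
  · simp [hpq rfl]
  · rw [← sub_eq_zero, mul_log_div_sub_sub_eq_mul_klFun hq, mul_eq_zero,
      klFun_eq_zero_iff (div_nonneg hp hq.le), div_eq_one_iff_eq hq.ne']
    simp [hq.ne']

variable {ι : Type*} [Fintype ι] {p q : ι → ℝ}

lemma discreteKL_eq_sum_sub (hsum : ∑ i, p i = ∑ i, q i) :
    discreteKL p q = ∑ i, (p i * log (p i / q i) - (p i - q i)) := by
  rw [discreteKL, sum_sub_distrib, sum_sub_distrib, hsum, sub_self, sub_zero]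

theorem discreteKL_nonneg (hp : 0 ≤ p) (hq : 0 ≤ q) (hpq : ∀ i, q i = 0 → p i = 0)
    (hsum : ∑ i, p i = ∑ i, q i) : 0 ≤ discreteKL p q := by
  rw [discreteKL_eq_sum_sub hsum]
  exact sum_nonneg fun i _ => sub_nonneg.2 (sub_le_mul_log_div (hp i) (hq i) (hpq i))

theorem discreteKL_eq_zero_iff (hp : 0 ≤ p) (hq : 0 ≤ q) (hpq : ∀ i, q i = 0 → p i = 0)
    (hsum : ∑ i, p i = ∑ i, q i) : discreteKL p q = 0 ↔ p = q := by
  rw [discreteKL_eq_sum_sub hsum,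
    sum_eq_zero_iff_of_nonneg fun i _ => sub_nonneg.2 (sub_le_mul_log_div (hp i) (hq i) (hpq i)),
    funext_iff]
  simp only [mem_univ, true_implies, sub_eq_zero, mul_log_div_eq_sub_iff (hp _) (hq _) (hpq _)]

lemma discreteKL_self (p : ι → ℝ) : discreteKL p p = 0 :=
  sum_eq_zero fun i _ => by by_cases h : p i = 0 <;> simp [h]

end Gibbs

section MarginalUpdate

variable {X Y : Type*} [Fintype Y]

def fstMarginal (P : X × Y → ℝ) (x : X) : ℝ := ∑ y, P (x, y)

/-- `Q` with its `X`-marginal replaced by `ρ` and its conditional `Q(y|x)` kept. -/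
def marginalUpdate (Q : X × Y → ℝ) (ρ : X → ℝ) (z : X × Y) : ℝ :=
  Q z * ρ z.1 / fstMarginal Q z.1

lemma sum_eq_sum_fstMarginal [Fintype X] (P : X × Y → ℝ) : ∑ z, P z = ∑ x, fstMarginal P x :=
  Fintype.sum_prod_type P

lemma le_fstMarginal {P : X × Y → ℝ} (hP : 0 ≤ P) (z : X × Y) : P z ≤ fstMarginal P z.1 :=
  single_le_sum (fun y _ => hP (z.1, y)) (mem_univ z.2)

variable [Nonempty Y] {Q : X × Y → ℝ} {ρ : X → ℝ}

lemma fstMarginal_pos (hQ : ∀ z, 0 < Q z) (x : X) : 0 < fstMarginal Q x :=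
  sum_pos (fun y _ => hQ (x, y)) univ_nonempty

lemma marginalUpdate_nonneg (hQ : ∀ z, 0 < Q z) (hρ : 0 ≤ ρ) : 0 ≤ marginalUpdate Q ρ :=
  fun z => div_nonneg (mul_nonneg (hQ z).le (hρ z.1)) (fstMarginal_pos hQ z.1).le

lemma fstMarginal_marginalUpdate (hQ : ∀ z, 0 < Q z) : fstMarginal (marginalUpdate Q ρ) = ρ := by
  funext x
  simp only [fstMarginal, marginalUpdate, mul_div_assoc, ← sum_mul]
  exact mul_div_cancel₀ _ (fstMarginal_pos hQ x).ne'

lemma marginalUpdate_eq_zero_iff (hQ : ∀ z, 0 < Q z) (z : X × Y) :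
    marginalUpdate Q ρ z = 0 ↔ ρ z.1 = 0 := by
  simp [marginalUpdate, (hQ z).ne', (fstMarginal_pos hQ z.1).ne']

variable {P : X × Y → ℝ}

lemma eq_zero_of_marginalUpdate_eq_zero (hQ : ∀ z, 0 < Q z) (hP : 0 ≤ P)
    (hPρ : fstMarginal P = ρ) (z : X × Y) (hz : marginalUpdate Q ρ z = 0) : P z = 0 := by
  rw [marginalUpdate_eq_zero_iff hQ, ← hPρ] at hz
  exact le_antisymm (hz ▸ le_fstMarginal hP z) (hP z)

lemma div_eq_div_marginalUpdate_mul (hQ : ∀ z, 0 < Q z) {z : X × Y} (hρz : ρ z.1 ≠ 0) (p : ℝ) :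
    p / Q z = p / marginalUpdate Q ρ z * (ρ z.1 / fstMarginal Q z.1) := by
  have := (hQ z).ne'
  have := (fstMarginal_pos hQ z.1).ne'
  rw [marginalUpdate]
  field_simp

theorem discreteKL_eq_discreteKL_marginalUpdate_add [Fintype X] (hQ : ∀ z, 0 < Q z) (hP : 0 ≤ P)
    (hPρ : fstMarginal P = ρ) :
    discreteKL P Q = discreteKL P (marginalUpdate Q ρ) + discreteKL ρ (fstMarginal Q) := by
  have hsplit : ∀ z, P z * log (P z / Q z) = P z * log (P z / marginalUpdate Q ρ z)
      + P z * log (ρ z.1 / fstMarginal Q z.1) := by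
    intro z
    by_cases hPz : P z = 0
    · simp [hPz]
    have hρz : ρ z.1 ≠ 0 := fun h =>
      hPz (eq_zero_of_marginalUpdate_eq_zero hQ hP hPρ z ((marginalUpdate_eq_zero_iff hQ z).2 h))
    rw [div_eq_div_marginalUpdate_mul hQ hρz, log_mul, mul_add]
    · exact div_ne_zero hPz (mt (marginalUpdate_eq_zero_iff hQ z).1 hρz)
    · exact div_ne_zero hρz (fstMarginal_pos hQ z.1).ne'
  have hρ_term : ∑ z, P z * log (ρ z.1 / fstMarginal Q z.1) = discreteKL ρ (fstMarginal Q) := by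
    rw [Fintype.sum_prod_type, discreteKL, ← hPρ]
    simp only [fstMarginal, sum_mul]
  rw [discreteKL, discreteKL, ← hρ_term, ← sum_add_distrib]
  exact sum_congr rfl fun z _ => hsplit z

theorem discreteKL_marginalUpdate [Fintype X] (hQ : ∀ z, 0 < Q z) (hρ : 0 ≤ ρ) :
    discreteKL (marginalUpdate Q ρ) Q = discreteKL ρ (fstMarginal Q) := by
  rw [discreteKL_eq_discreteKL_marginalUpdate_add hQ (marginalUpdate_nonneg hQ hρ)
    (fstMarginal_marginalUpdate hQ), discreteKL_self, zero_add]

end MarginalUpdate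

end

/-- Maximum entropy updating of a joint distribution when the new information is
the `X`-marginal `ρD`: the posterior `P*(x,y) = Q(x,y)·ρD(x)/ρ_Q(x)` is a probability
distribution with `X`-marginal `ρD`, it maximizes the relative entropy `S[P,Q]` among
all such posteriors `P` (with equality iff `P = P*`), and the maximal value is
`−∑ x, ρD(x) log(ρD(x)/ρ_Q(x))`. -/
theorem marginal_constraint_max_entropy_update {X Y : Type*} [Fintype X] [Fintype Y]
    (Q : X × Y → ℝ) (hQ0 : ∀ z, 0 < Q z) (hQ1 : ∑ z, Q z = 1)
    (ρQ : X → ℝ) (hρQ : ∀ x, ρQ x = ∑ y, Q (x, y))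
    (ρD : X → ℝ) (hρD0 : ∀ x, 0 ≤ ρD x) (hρD1 : ∑ x, ρD x = 1)
    (Pstar : X × Y → ℝ) (hPstar : ∀ x y, Pstar (x, y) = Q (x, y) * ρD x / ρQ x) :
    (∀ z, 0 ≤ Pstar z) ∧ (∑ z, Pstar z = 1) ∧ (∀ x, ∑ y, Pstar (x, y) = ρD x) ∧
      ∀ P : X × Y → ℝ, (∀ z, 0 ≤ P z) → (∑ z, P z = 1) →
        (∀ x, ∑ y, P (x, y) = ρD x) →
        (-∑ z, P z * Real.log (P z / Q z) ≤ -∑ z, Pstar z * Real.log (Pstar z / Q z)) ∧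
        (-∑ z, Pstar z * Real.log (Pstar z / Q z)
            = -∑ x, ρD x * Real.log (ρD x / ρQ x)) ∧
        (-∑ z, P z * Real.log (P z / Q z) = -∑ z, Pstar z * Real.log (Pstar z / Q z)
            ↔ P = Pstar) := by
  have : Nonempty Y := by
    by_contra hY
    simp [not_nonempty_iff.1 hY] at hQ1
  obtain rfl : ρQ = fstMarginal Q := funext hρQ
  obtain rfl : Pstar = marginalUpdate Q ρD := funext fun z => hPstar z.1 z.2
  have hPstar_marg := fstMarginal_marginalUpdate (ρ := ρD) hQ0
  have hPstar_sum : ∑ z, marginalUpdate Q ρD z = 1 := by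
    rw [sum_eq_sum_fstMarginal, hPstar_marg, hρD1]
  refine ⟨marginalUpdate_nonneg hQ0 hρD0, hPstar_sum, congrFun hPstar_marg, ?_⟩
  intro P hP0 hP1 hPm
  have hchain := discreteKL_eq_discreteKL_marginalUpdate_add hQ0 hP0 (funext hPm)
  have hstar := discreteKL_marginalUpdate hQ0 hρD0
  have hP_abs := eq_zero_of_marginalUpdate_eq_zero hQ0 hP0 (funext hPm)
  have hsum : ∑ z, P z = ∑ z, marginalUpdate Q ρD z := hP1.trans hPstar_sum.symm
  have hKL_nonneg := discreteKL_nonneg hP0 (marginalUpdate_nonneg hQ0 hρD0) hP_abs hsum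
  have hKL_zero := discreteKL_eq_zero_iff hP0 (marginalUpdate_nonneg hQ0 hρD0) hP_abs hsum
  change -discreteKL P Q ≤ -discreteKL _ Q ∧ -discreteKL _ Q = -discreteKL ρD _ ∧
    (-discreteKL P Q = -discreteKL _ Q ↔ _)
  rw [hchain, hstar, ← hKL_zero]
  refine ⟨by linarith, rfl, by constructor <;> intro <;> linarith⟩
end

section
/- Let η > 0, m > 0 and μ ∈ ℝ be constants, and let ρ, φ, V : ℝ × ℝ → ℝ be such that ρ(x,t) > 0 everywhere and ρ and φ are twice continuously differentiable. Suppose the continuity (Fokker–Planck) equation ∂_t ρ = −(η/m)·(∂_x ρ · ∂_x φ + ρ · ∂_x² φ) and the phase equation η·∂_t φ + (η²/(2m))·(∂_x φ)² + V − (μ·η²/(2m²))·(∂_x² √ρ)/√ρ = 0 hold at every (x,t). Then the complex function Ψ(x,t) = √(ρ(x,t)) · exp(i·φ(x,t)) satisfies i·η·∂_t Ψ = −(η²/(2m))·∂_x² Ψ + V·Ψ + (η²/(2m))·(1 − μ/m)·((∂_x² √ρ)/√ρ)·Ψ at every (x,t). -/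
open Complex

/-!
With `R = √ρ`, the ansatz `Ψ = R e^{iφ}` gives `∂_t Ψ = (∂_t R + i R ∂_t φ) e^{iφ}` and
`∂_x² Ψ = (∂_x² R + 2i ∂_x R ∂_x φ - R (∂_x φ)² + i R ∂_x² φ) e^{iφ}`. After dividing by `e^{iφ}`,
the real part of the claimed equation is `-R` times the phase equation, and its imaginary part is
`η` times the Fokker–Planck equation rewritten for the amplitude,
`∂_t R = -(η/m) (∂_x R ∂_x φ + R ∂_x² φ / 2)`.
-/

section AmplitudePhase

variable {R φ : ℝ → ℝ} {x : ℝ}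

theorem hasDerivAt_ofReal_mul_cexp_I_mul {R' φ' : ℝ} (hR : HasDerivAt R R' x)
    (hφ : HasDerivAt φ φ' x) :
    HasDerivAt (fun y => (R y : ℂ) * exp (I * φ y)) ((R' + I * R x * φ') * exp (I * φ x)) x :=
  (hR.ofReal_comp.mul (hφ.ofReal_comp.const_mul I).cexp).congr_deriv (by ring)

theorem deriv_ofReal_mul_cexp_I_mul (hR : DifferentiableAt ℝ R x)
    (hφ : DifferentiableAt ℝ φ x) :
    deriv (fun y => (R y : ℂ) * exp (I * φ y)) x
      = (deriv R x + I * R x * deriv φ x) * exp (I * φ x) :=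
  (hasDerivAt_ofReal_mul_cexp_I_mul hR.hasDerivAt hφ.hasDerivAt).deriv

theorem deriv_deriv_ofReal_mul_cexp_I_mul (hR : Differentiable ℝ R) (hφ : Differentiable ℝ φ)
    (hR' : DifferentiableAt ℝ (deriv R) x) (hφ' : DifferentiableAt ℝ (deriv φ) x) :
    deriv (deriv fun y => (R y : ℂ) * exp (I * φ y)) x
      = (deriv (deriv R) x + 2 * I * deriv R x * deriv φ x - R x * deriv φ x ^ 2
          + I * R x * deriv (deriv φ) x) * exp (I * φ x) := by
  have hderiv : (deriv fun y => (R y : ℂ) * exp (I * φ y))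
      = fun y => (((deriv R y : ℝ) : ℂ) + I * R y * deriv φ y) * exp (I * φ y) :=
    funext fun y => deriv_ofReal_mul_cexp_I_mul (hR y) (hφ y)
  rw [hderiv]
  have hexp := (hφ x).hasDerivAt.ofReal_comp.const_mul I |>.cexp
  refine (((hR'.hasDerivAt.ofReal_comp.add (((hR x).hasDerivAt.ofReal_comp.const_mul I).mul
    hφ'.hasDerivAt.ofReal_comp)).mul hexp).congr_deriv ?_).deriv
  simp only [Pi.add_apply, Pi.mul_apply]
  linear_combination (R x * deriv φ x ^ 2 * exp (I * φ x) : ℂ) * I_sq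

end AmplitudePhase

theorem deriv_eq_two_mul_sqrt_mul_deriv_sqrt {f : ℝ → ℝ} {x : ℝ} (hf : DifferentiableAt ℝ f x)
    (hx : 0 < f x) : deriv f x = 2 * √(f x) * deriv (fun y => √(f y)) x := by
  rw [deriv_sqrt hf hx.ne']
  field_simp

theorem madelung_identity {η m μ R Rt Rx Rxx φt φx φxx V : ℝ} (hR : R ≠ 0)
    (hcont : Rt = -(η / m) * (Rx * φx + R * φxx / 2))
    (hphase : η * φt + η ^ 2 / (2 * m) * φx ^ 2 + V - μ * η ^ 2 / (2 * m ^ 2) * (Rxx / R) = 0)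
    (e : ℂ) :
    I * η * ((Rt + I * R * φt) * e)
      = -(η ^ 2 / (2 * m)) * ((Rxx + 2 * I * Rx * φx - R * φx ^ 2 + I * R * φxx) * e)
        + V * (R * e) + η ^ 2 / (2 * m) * (1 - μ / m) * ((Rxx / R : ℝ) : ℂ) * (R * e) := by
  have hRxx : (Rxx / R : ℂ) * R = Rxx := div_mul_cancel₀ _ (ofReal_ne_zero.2 hR)
  have hcontC : (Rt : ℂ) = -(η / m) * (Rx * φx + R * φxx / 2) := by exact_mod_cast hcont
  have hphaseC : (η * φt + η ^ 2 / (2 * m) * φx ^ 2 + V - μ * η ^ 2 / (2 * m ^ 2) * (Rxx / R) : ℂ)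
      = 0 := by exact_mod_cast hphase
  push_cast
  linear_combination e * (I * η * hcontC - R * hphaseC - η ^ 2 / (2 * m) * hRxx
    + η * R * φt * I_sq)

theorem eqd_dynamical_equation_general
    (η m μ : ℝ)
    (ρ φ V : ℝ → ℝ → ℝ)
    (hρpos : ∀ x t, 0 < ρ x t)
    (hρ : ContDiff ℝ 2 (Function.uncurry ρ))
    (hφ : ContDiff ℝ 2 (Function.uncurry φ))
    (hFP : ∀ x t, deriv (fun s => ρ x s) t
        = -(η / m) * (deriv (fun y => ρ y t) x * deriv (fun y => φ y t) x
            + ρ x t * deriv (deriv (fun y => φ y t)) x))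
    (hphase : ∀ x t, η * deriv (fun s => φ x s) t
        + (η ^ 2 / (2 * m)) * (deriv (fun y => φ y t) x) ^ 2 + V x t
        - (μ * η ^ 2 / (2 * m ^ 2))
            * (deriv (deriv (fun y => Real.sqrt (ρ y t))) x / Real.sqrt (ρ x t)) = 0)
    (Ψ : ℝ → ℝ → ℂ)
    (hΨ : ∀ x t, Ψ x t = (Real.sqrt (ρ x t) : ℂ) * Complex.exp (Complex.I * (φ x t : ℝ))) :
    ∀ x t, Complex.I * (η : ℂ) * deriv (fun s => Ψ x s) t
        = -((η : ℂ) ^ 2 / (2 * (m : ℂ))) * deriv (deriv (fun y => Ψ y t)) x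
          + (V x t : ℂ) * Ψ x t
          + ((η : ℂ) ^ 2 / (2 * (m : ℂ))) * (1 - (μ : ℂ) / (m : ℂ))
              * ((deriv (deriv (fun y => Real.sqrt (ρ y t))) x / Real.sqrt (ρ x t) : ℝ) : ℂ)
              * Ψ x t := by
  intro x t
  have hρx : ContDiff ℝ 2 fun y => ρ y t := hρ.comp (contDiff_prodMk_left t)
  have hρt : ContDiff ℝ 2 fun s => ρ x s := hρ.comp (contDiff_prodMk_right x)
  have hφx : ContDiff ℝ 2 fun y => φ y t := hφ.comp (contDiff_prodMk_left t)
  have hφt : ContDiff ℝ 2 fun s => φ x s := hφ.comp (contDiff_prodMk_right x)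
  have hRx : ContDiff ℝ 2 fun y => √(ρ y t) := hρx.sqrt fun y => (hρpos y t).ne'
  have hRt : ContDiff ℝ 2 fun s => √(ρ x s) := hρt.sqrt fun s => (hρpos x s).ne'
  have hcont : deriv (fun s => √(ρ x s)) t = -(η / m) * (deriv (fun y => √(ρ y t)) x
      * deriv (fun y => φ y t) x + √(ρ x t) * deriv (deriv fun y => φ y t) x / 2) := by
    have hR : √(ρ x t) ≠ 0 := (Real.sqrt_pos.2 (hρpos x t)).ne'
    have hFPx := hFP x t
    rw [deriv_eq_two_mul_sqrt_mul_deriv_sqrt (hρt.differentiable two_ne_zero t) (hρpos x t),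
      deriv_eq_two_mul_sqrt_mul_deriv_sqrt (hρx.differentiable two_ne_zero x) (hρpos x t)] at hFPx
    apply mul_left_cancel₀ (mul_ne_zero two_ne_zero hR)
    linear_combination hFPx + η / m * deriv (deriv fun y => φ y t) x * Real.sq_sqrt (hρpos x t).le
  simp only [hΨ]
  rw [deriv_ofReal_mul_cexp_I_mul (hRt.differentiable two_ne_zero t)
      (hφt.differentiable two_ne_zero t),
    deriv_deriv_ofReal_mul_cexp_I_mul (hRx.differentiable two_ne_zero)
      (hφx.differentiable two_ne_zero) (hRx.differentiable_deriv_two x)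
      (hφx.differentiable_deriv_two x)]
  exact madelung_identity (Real.sqrt_pos.2 (hρpos x t)).ne' hcont (hphase x t) _

/-- The central derivation of entropic quantum dynamics (one spatial dimension):
if the density `ρ` and phase `φ` satisfy the Fokker–Planck (continuity) equation and
the phase equation obtained from energy conservation, then `Ψ = √ρ · exp(iφ)` obeys
the nonlinear dynamical equation with current mass `m` and osmotic mass `μ`.
Functions of two variables are curried, `F x t`, with `x` the spatial and `t` the
time variable; `∂_t F (x,t) = deriv (F x) t`, `∂_x F (x,t) = deriv (fun y => F y t) x`. -/
theorem eqd_dynamical_equation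
    (η m μ : ℝ) (hη : 0 < η) (hm : 0 < m)
    (ρ φ V : ℝ → ℝ → ℝ)
    (hρpos : ∀ x t, 0 < ρ x t)
    (hρ : ContDiff ℝ 2 (Function.uncurry ρ))
    (hφ : ContDiff ℝ 2 (Function.uncurry φ))
    (hFP : ∀ x t, deriv (fun s => ρ x s) t
        = -(η / m) * (deriv (fun y => ρ y t) x * deriv (fun y => φ y t) x
            + ρ x t * deriv (deriv (fun y => φ y t)) x))
    (hphase : ∀ x t, η * deriv (fun s => φ x s) t
        + (η ^ 2 / (2 * m)) * (deriv (fun y => φ y t) x) ^ 2 + V x t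
        - (μ * η ^ 2 / (2 * m ^ 2))
            * (deriv (deriv (fun y => Real.sqrt (ρ y t))) x / Real.sqrt (ρ x t)) = 0)
    (Ψ : ℝ → ℝ → ℂ)
    (hΨ : ∀ x t, Ψ x t = (Real.sqrt (ρ x t) : ℂ) * Complex.exp (Complex.I * (φ x t : ℝ))) :
    ∀ x t, Complex.I * (η : ℂ) * deriv (fun s => Ψ x s) t
        = -((η : ℂ) ^ 2 / (2 * (m : ℂ))) * deriv (deriv (fun y => Ψ y t)) x
          + (V x t : ℂ) * Ψ x t
          + ((η : ℂ) ^ 2 / (2 * (m : ℂ))) * (1 - (μ : ℂ) / (m : ℂ))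
              * ((deriv (deriv (fun y => Real.sqrt (ρ y t))) x / Real.sqrt (ρ x t) : ℝ) : ℂ)
              * Ψ x t :=
  eqd_dynamical_equation_general η m μ ρ φ V hρpos hρ hφ hFP hphase Ψ hΨ
end

section
/- Let ħ > 0 and m > 0 be constants, let V : ℝ × ℝ → ℝ be continuous, and let Ψ : ℝ × ℝ → ℂ be twice continuously differentiable and satisfy the Schrödinger equation i·ħ·∂_t Ψ(x,t) = −(ħ²/(2m))·∂_x² Ψ(x,t) + V(x,t)·Ψ(x,t) for all (x,t). Let ξ : ℝ → ℝ be twice continuously differentiable, and define the transformed wave function Ψ̃(x,t) = Ψ(x − ξ(t), t) · exp( (i·m/ħ) · ( ξ'(t)·x − (1/2)·∫_0^t ξ'(s)² ds ) ). Then Ψ̃ satisfies i·ħ·∂_t Ψ̃(x,t) = −(ħ²/(2m))·∂_x² Ψ̃(x,t) + Ṽ(x,t)·Ψ̃(x,t) for all (x,t), where Ṽ(x,t) = V(x − ξ(t), t) − m·ξ''(t)·x. -/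
/-!
In the moving frame `y = x - ξ t` spatial derivatives are unchanged, while `∂ₜ` picks up the
drift `-ξ' ∂ₓΨ`. Multiplying by `exp (i θ)` with `∂ₓθ = (m/ħ) ξ'` adds
`2 i (m/ħ) ξ' ∂ₓ - (m/ħ)² ξ'²` to `∂ₓ²`: in the kinetic term the first summand cancels the drift
and the second cancels the `-½ (m/ħ) ξ'²` part of `∂ₜθ`. What is left of `-ħ ∂ₜθ` is `-m ξ'' x`,
the effective gravitational potential.
-/

open Complex intervalIntegral

theorem hasDerivAt_uncurry_comp {E : Type*} [NormedAddCommGroup E] [NormedSpace ℝ E]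
    {F : ℝ → ℝ → E} {γ₁ γ₂ : ℝ → ℝ} {a b t : ℝ}
    (hF : DifferentiableAt ℝ (Function.uncurry F) (γ₁ t, γ₂ t))
    (h₁ : HasDerivAt γ₁ a t) (h₂ : HasDerivAt γ₂ b t) :
    HasDerivAt (fun s => F (γ₁ s) (γ₂ s))
      (a • deriv (fun y => F y (γ₂ t)) (γ₁ t) + b • deriv (F (γ₁ t)) (γ₂ t)) t := by
  set L := fderiv ℝ (Function.uncurry F) (γ₁ t, γ₂ t)
  have hL : HasFDerivAt (Function.uncurry F) L (γ₁ t, γ₂ t) := hF.hasFDerivAt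
  have hx : deriv (fun y => F y (γ₂ t)) (γ₁ t) = L (1, 0) :=
    (hL.comp_hasDerivAt (f := fun y => (y, γ₂ t)) (γ₁ t)
      ((hasDerivAt_id _).prodMk (hasDerivAt_const _ _))).deriv
  have ht : deriv (F (γ₁ t)) (γ₂ t) = L (0, 1) :=
    (hL.comp_hasDerivAt (f := fun s => (γ₁ t, s)) (γ₂ t)
      ((hasDerivAt_const _ _).prodMk (hasDerivAt_id _))).deriv
  have hab : ((a, b) : ℝ × ℝ) = a • (1, 0) + b • (0, 1) := by ext <;> simp
  rw [hx, ht, ← map_smul, ← map_smul, ← map_add, ← hab]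
  exact hL.comp_hasDerivAt t (h₁.prodMk h₂)

theorem deriv_deriv_mul_cexp_of_hasDerivAt_const {f : ℝ → ℂ} {φ : ℝ → ℂ} {c : ℂ} {x : ℝ}
    (hφ : ∀ y, HasDerivAt φ c y) (hf : Differentiable ℝ f)
    (hf' : DifferentiableAt ℝ (deriv f) x) :
    deriv (deriv fun y => f y * exp (φ y)) x
      = (deriv (deriv f) x + 2 * c * deriv f x + c ^ 2 * f x) * exp (φ x) := by
  have hexp : ∀ y, HasDerivAt (fun y => exp (φ y)) (exp (φ y) * c) y := fun y => (hφ y).cexp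
  have h1 : deriv (fun y => f y * exp (φ y)) = fun y => (deriv f y + c * f y) * exp (φ y) := by
    funext y
    rw [((hf y).hasDerivAt.fun_mul (hexp y)).deriv]
    ring
  rw [h1, ((hf'.hasDerivAt.fun_add ((hf x).hasDerivAt.const_mul c)).fun_mul (hexp x)).deriv]
  ring

theorem hasDerivAt_comp_moving_frame {E : Type*} [NormedAddCommGroup E] [NormedSpace ℝ E]
    {F : ℝ → ℝ → E} {ξ : ℝ → ℝ} {v x t : ℝ}
    (hF : DifferentiableAt ℝ (Function.uncurry F) (x - ξ t, t)) (hξ : HasDerivAt ξ v t) :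
    HasDerivAt (fun s => F (x - ξ s) s)
      (deriv (F (x - ξ t)) t - v • deriv (fun y => F y t) (x - ξ t)) t := by
  convert hasDerivAt_uncurry_comp hF ((hasDerivAt_const t x).fun_sub hξ) (hasDerivAt_id' t) using 1
  rw [zero_sub, neg_smul, one_smul, neg_add_eq_sub]

theorem deriv_deriv_comp_sub_const {E : Type*} [NormedAddCommGroup E] [NormedSpace ℝ E]
    (f : ℝ → E) (a x : ℝ) :
    deriv (deriv fun y => f (y - a)) x = deriv (deriv f) (x - a) := by
  rw [funext fun y => deriv_comp_sub_const f a y, deriv_comp_sub_const]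

noncomputable def galileanPhase (m hbar : ℝ) (ξ : ℝ → ℝ) (x t : ℝ) : ℝ :=
  m / hbar * (deriv ξ t * x - 1 / 2 * ∫ s in (0 : ℝ)..t, deriv ξ s ^ 2)

theorem hasDerivAt_galileanPhase_space (m hbar : ℝ) (ξ : ℝ → ℝ) (x t : ℝ) :
    HasDerivAt (fun y => galileanPhase m hbar ξ y t) (m / hbar * deriv ξ t) x := by
  simpa [galileanPhase] using (((hasDerivAt_id' x).const_mul (deriv ξ t)).sub_const
    (1 / 2 * ∫ s in (0 : ℝ)..t, deriv ξ s ^ 2)).const_mul (m / hbar)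

theorem hasDerivAt_galileanPhase_time (m hbar : ℝ) {ξ : ℝ → ℝ} (x : ℝ) {t : ℝ}
    (hξ' : Continuous (deriv ξ)) (hξ'' : DifferentiableAt ℝ (deriv ξ) t) :
    HasDerivAt (galileanPhase m hbar ξ x)
      (m / hbar * (deriv (deriv ξ) t * x - 1 / 2 * deriv ξ t ^ 2)) t := by
  have hsq : Continuous fun s => deriv ξ s ^ 2 := hξ'.pow 2
  have hint : HasDerivAt (fun r => ∫ s in (0 : ℝ)..r, deriv ξ s ^ 2) (deriv ξ t ^ 2) t :=
    integral_hasDerivAt_right (hsq.intervalIntegrable 0 t)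
      (hsq.stronglyMeasurableAtFilter _ _) hsq.continuousAt
  exact ((hξ''.hasDerivAt.mul_const x).sub (hint.const_mul (1 / 2))).const_mul (m / hbar)

theorem schrodinger_covariant_extended_galilean_general
    (hbar m : ℝ) (hbar_pos : 0 < hbar) (hm : 0 < m)
    (V : ℝ → ℝ → ℝ)
    (Ψ : ℝ → ℝ → ℂ) (hΨ : ContDiff ℝ 2 (Function.uncurry Ψ))
    (hSE : ∀ x t, Complex.I * (hbar : ℂ) * deriv (fun s => Ψ x s) t
        = -((hbar : ℂ) ^ 2 / (2 * (m : ℂ))) * deriv (deriv (fun y => Ψ y t)) x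
          + (V x t : ℂ) * Ψ x t)
    (ξ : ℝ → ℝ) (hξ : ContDiff ℝ 2 ξ)
    (Ψt : ℝ → ℝ → ℂ)
    (hΨt : ∀ x t, Ψt x t = Ψ (x - ξ t) t
        * Complex.exp (Complex.I * ((m / hbar) *
            (deriv ξ t * x - (1 / 2) * ∫ s in (0 : ℝ)..t, (deriv ξ s) ^ 2) : ℝ)))
    (Vt : ℝ → ℝ → ℝ)
    (hVt : ∀ x t, Vt x t = V (x - ξ t) t - m * deriv (deriv ξ) t * x) :
    ∀ x t, Complex.I * (hbar : ℂ) * deriv (fun s => Ψt x s) t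
        = -((hbar : ℂ) ^ 2 / (2 * (m : ℂ))) * deriv (deriv (fun y => Ψt y t)) x
          + (Vt x t : ℂ) * Ψt x t := by
  intro x t
  have hΨt_phase : ∀ x t, Ψt x t = Ψ (x - ξ t) t * exp (I * galileanPhase m hbar ξ x t) := hΨt
  have hΨ_time := hasDerivAt_comp_moving_frame (hΨ.differentiable (by norm_num) (x - ξ t, t))
    (hξ.differentiable (by norm_num) t).hasDerivAt
  have hphase_time := ((hasDerivAt_galileanPhase_time m hbar x (hξ.continuous_deriv (by norm_num))
    (hξ.differentiable_deriv_two t)).ofReal_comp.const_mul I).cexp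
  have hslice : ContDiff ℝ 2 fun y => Ψ (y - ξ t) t :=
    hΨ.comp ((contDiff_id.sub contDiff_const).prodMk contDiff_const)
  rw [show (fun s => Ψt x s) = _ from funext (hΨt_phase x), (hΨ_time.fun_mul hphase_time).deriv,
    show (fun y => Ψt y t) = _ from funext fun y => hΨt_phase y t,
    deriv_deriv_mul_cexp_of_hasDerivAt_const
      (fun y => (hasDerivAt_galileanPhase_space m hbar ξ y t).ofReal_comp.const_mul I)
      (hslice.differentiable (by norm_num)) (hslice.differentiable_deriv_two x),
    deriv_deriv_comp_sub_const (fun y => Ψ y t), deriv_comp_sub_const (fun y => Ψ y t),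
    hΨt_phase x t, hVt, real_smul]
  have hbar0 : (hbar : ℂ) ≠ 0 := ofReal_ne_zero.mpr hbar_pos.ne'
  have hm0 : (m : ℂ) ≠ 0 := ofReal_ne_zero.mpr hm.ne'
  push_cast
  linear_combination (norm := skip) exp (I * galileanPhase m hbar ξ x t) * hSE (x - ξ t) t
  field_simp
  ring_nf
  rw [I_sq]
  ring

/-- Covariance of the Schrödinger equation under the extended Galilean transformation
`x̃ = x + ξ(t)` (one spatial dimension): if `Ψ` solves `ihbar ∂_t Ψ = −(hbar²/2m) ∂_x² Ψ + VΨ`,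
then the transformed wave function
`Ψ̃(x,t) = Ψ(x − ξ(t), t) · exp((i m/hbar)(ξ'(t)·x − ½∫₀ᵗ ξ'(s)² ds))`
solves the Schrödinger equation with the transformed potential
`Ṽ(x,t) = V(x − ξ(t), t) − m·ξ''(t)·x`.
Functions of two variables are curried, `F x t`; `∂_t F (x,t) = deriv (F x) t`,
`∂_x F (x,t) = deriv (fun y => F y t) x`. -/
theorem schrodinger_covariant_extended_galilean
    (hbar m : ℝ) (hbar_pos : 0 < hbar) (hm : 0 < m)
    (V : ℝ → ℝ → ℝ) (hV : Continuous (Function.uncurry V))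
    (Ψ : ℝ → ℝ → ℂ) (hΨ : ContDiff ℝ 2 (Function.uncurry Ψ))
    (hSE : ∀ x t, Complex.I * (hbar : ℂ) * deriv (fun s => Ψ x s) t
        = -((hbar : ℂ) ^ 2 / (2 * (m : ℂ))) * deriv (deriv (fun y => Ψ y t)) x
          + (V x t : ℂ) * Ψ x t)
    (ξ : ℝ → ℝ) (hξ : ContDiff ℝ 2 ξ)
    (Ψt : ℝ → ℝ → ℂ)
    (hΨt : ∀ x t, Ψt x t = Ψ (x - ξ t) t
        * Complex.exp (Complex.I * ((m / hbar) *
            (deriv ξ t * x - (1 / 2) * ∫ s in (0 : ℝ)..t, (deriv ξ s) ^ 2) : ℝ)))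
    (Vt : ℝ → ℝ → ℝ)
    (hVt : ∀ x t, Vt x t = V (x - ξ t) t - m * deriv (deriv ξ) t * x) :
    ∀ x t, Complex.I * (hbar : ℂ) * deriv (fun s => Ψt x s) t
        = -((hbar : ℂ) ^ 2 / (2 * (m : ℂ))) * deriv (deriv (fun y => Ψt y t)) x
          + (Vt x t : ℂ) * Ψt x t :=
  schrodinger_covariant_extended_galilean_general hbar m hbar_pos hm V Ψ hΨ hSE ξ hξ Ψt hΨt Vt hVt
end

section
/- Let ħ > 0, m > 0 and g ∈ ℝ be constants, and let Ψ : ℝ × ℝ → ℂ be twice continuously differentiable and satisfy the free Schrödinger equation i·ħ·∂_t Ψ(x,t) = −(ħ²/(2m))·∂_x² Ψ(x,t) for all (x,t). Define Ψ̃(x,t) = Ψ(x − (1/2)·g·t², t) · exp( (i·m/ħ) · ( g·t·x − (1/6)·g²·t³ ) ). Then Ψ̃ satisfies the Schrödinger equation with a uniform gravitational potential: i·ħ·∂_t Ψ̃(x,t) = −(ħ²/(2m))·∂_x² Ψ̃(x,t) − m·g·x·Ψ̃(x,t) for all (x,t). -/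
/-!
Write `k = m g t / hbar` for the slope in `x` of the phase `θ`. Since `θ` is affine in `x`, the
factor `exp (I θ)` turns `∂ₓ²` into `(∂ₓ + I k)²`; its cross term `-(hbar²/2m)·2 I k ∂ₓ = -I hbar g t ∂ₓ`
is exactly the drift `-g t ∂ₓ` that the moving argument `x - g t²/2` contributes to `I hbar ∂ₜ`, and
its term `hbar² k²/2m = m g² t²/2` matches the same term of `-hbar ∂ₜθ = -m g x + m g² t²/2`.
What remains is the potential `-m g x`.
-/

open Complex

section PartialDerivatives

variable {E : Type*} [NormedAddCommGroup E] [NormedSpace ℝ E] {F : ℝ → ℝ → E}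

theorem fderiv_uncurry_apply {x t : ℝ} (hF : DifferentiableAt ℝ (Function.uncurry F) (x, t))
    (v w : ℝ) :
    fderiv ℝ (Function.uncurry F) (x, t) (v, w)
      = v • deriv (fun y => F y t) x + w • deriv (F x) t := by
  have hx : deriv (fun y => F y t) x = fderiv ℝ (Function.uncurry F) (x, t) (1, 0) :=
    (hF.hasFDerivAt.comp_hasDerivAt (𝕜 := ℝ) (f := fun y => (y, t)) x
      ((hasDerivAt_id x).prodMk (hasDerivAt_const x t))).deriv
  have ht : deriv (F x) t = fderiv ℝ (Function.uncurry F) (x, t) (0, 1) :=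
    (hF.hasFDerivAt.comp_hasDerivAt (𝕜 := ℝ) (f := fun s => (x, s)) t
      ((hasDerivAt_const t x).prodMk (hasDerivAt_id t))).deriv
  have hvw : ((v, w) : ℝ × ℝ) = v • ((1 : ℝ), (0 : ℝ)) + w • ((0 : ℝ), (1 : ℝ)) := by simp
  rw [hx, ht, hvw, map_add, map_smul, map_smul]

theorem hasDerivAt_uncurry_comp_s13 {a b : ℝ → ℝ} {a' b' s : ℝ}
    (hF : DifferentiableAt ℝ (Function.uncurry F) (a s, b s))
    (ha : HasDerivAt a a' s) (hb : HasDerivAt b b' s) :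
    HasDerivAt (fun r => F (a r) (b r))
      (a' • deriv (fun y => F y (b s)) (a s) + b' • deriv (F (a s)) (b s)) s := by
  rw [← fderiv_uncurry_apply hF]
  exact hF.hasFDerivAt.comp_hasDerivAt s (ha.prodMk hb)

end PartialDerivatives

section PhaseModulation

variable {f : ℝ → ℂ} {θ : ℝ → ℝ}

theorem hasDerivAt_mul_cexp_I_mul {f' : ℂ} {θ' s : ℝ} (hf : HasDerivAt f f' s)
    (hθ : HasDerivAt θ θ' s) :
    HasDerivAt (fun r => f r * exp (I * θ r)) ((f' + I * (θ' : ℂ) * f s) * exp (I * θ s)) s :=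
  (hf.mul (hθ.ofReal_comp.const_mul I).cexp).congr_deriv (by ring)

theorem deriv_deriv_mul_cexp_I_mul {k x : ℝ} (hθ : ∀ y, HasDerivAt θ k y)
    (hf : Differentiable ℝ f) (hf' : DifferentiableAt ℝ (deriv f) x) :
    deriv (deriv fun y => f y * exp (I * θ y)) x
      = (deriv (deriv f) x + 2 * I * k * deriv f x - k ^ 2 * f x) * exp (I * θ x) := by
  have hfirst : deriv (fun y => f y * exp (I * θ y))
      = fun y => (deriv f y + I * k * f y) * exp (I * θ y) :=
    funext fun y => (hasDerivAt_mul_cexp_I_mul (hf y).hasDerivAt (hθ y)).deriv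
  rw [hfirst]
  have hsecond := hasDerivAt_mul_cexp_I_mul (f := fun y => deriv f y + I * k * f y)
    (hf'.hasDerivAt.add ((hf x).hasDerivAt.const_mul (I * k))) (hθ x)
  rw [hsecond.deriv]
  linear_combination ((k : ℂ) ^ 2 * f x * exp (I * θ x)) * I_sq

end PhaseModulation

/-- The phase shift `ΔS` of the paper. -/
noncomputable def accelPhase (hbar m g x t : ℝ) : ℝ :=
  (m / hbar) * (g * t * x - (1 / 6) * g ^ 2 * t ^ 3)

noncomputable def accelFrame (hbar m g : ℝ) (Ψ : ℝ → ℝ → ℂ) (x t : ℝ) : ℂ :=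
  Ψ (x - (1 / 2) * g * t ^ 2) t * exp (I * accelPhase hbar m g x t)

section AcceleratedFrame

variable {hbar m g : ℝ} {Ψ : ℝ → ℝ → ℂ}

theorem hasDerivAt_accelPhase_space (x t : ℝ) :
    HasDerivAt (fun y => accelPhase hbar m g y t) (m / hbar * (g * t)) x :=
  (((hasDerivAt_id' x).const_mul (g * t)).sub_const _).const_mul (m / hbar)
    |>.congr_deriv (by ring)

theorem hasDerivAt_accelPhase_time (x t : ℝ) :
    HasDerivAt (accelPhase hbar m g x) (m / hbar * (g * x - (1 / 2) * g ^ 2 * t ^ 2)) t :=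
  ((((hasDerivAt_id' t).const_mul g).mul_const x).sub
    ((hasDerivAt_pow 3 t).const_mul ((1 / 6) * g ^ 2))).const_mul (m / hbar)
    |>.congr_deriv (by push_cast; ring)

theorem deriv_deriv_accelFrame_space (hΨ : ContDiff ℝ 2 (Function.uncurry Ψ)) (x t : ℝ) :
    deriv (deriv fun y => accelFrame hbar m g Ψ y t) x
      = (deriv (deriv fun y => Ψ y t) (x - (1 / 2) * g * t ^ 2)
          + 2 * I * (m / hbar * (g * t) : ℝ) * deriv (fun y => Ψ y t) (x - (1 / 2) * g * t ^ 2)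
          - ((m / hbar * (g * t) : ℝ) : ℂ) ^ 2 * Ψ (x - (1 / 2) * g * t ^ 2) t)
        * exp (I * accelPhase hbar m g x t) := by
  have hψ : ContDiff ℝ 2 fun y => Ψ (y - (1 / 2) * g * t ^ 2) t :=
    hΨ.comp ((contDiff_id.sub contDiff_const).prodMk contDiff_const)
  have hshift : deriv (fun y => Ψ (y - (1 / 2) * g * t ^ 2) t)
      = fun y => deriv (fun y => Ψ y t) (y - (1 / 2) * g * t ^ 2) :=
    funext fun y => deriv_comp_sub_const (f := fun y => Ψ y t) ..
  unfold accelFrame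
  rw [deriv_deriv_mul_cexp_I_mul (hasDerivAt_accelPhase_space · t)
    (hψ.differentiable (by norm_num)) ((hψ.deriv' (n := 1)).differentiable one_ne_zero x)]
  simp only [hshift, deriv_comp_sub_const]

theorem hasDerivAt_accelFrame_time (hΨ : Differentiable ℝ (Function.uncurry Ψ)) (x t : ℝ) :
    HasDerivAt (accelFrame hbar m g Ψ x)
      ((-(g * t) • deriv (fun y => Ψ y t) (x - (1 / 2) * g * t ^ 2)
          + deriv (Ψ (x - (1 / 2) * g * t ^ 2)) t
          + I * (m / hbar * (g * x - (1 / 2) * g ^ 2 * t ^ 2) : ℝ) * Ψ (x - (1 / 2) * g * t ^ 2) t)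
        * exp (I * accelPhase hbar m g x t)) t := by
  have hcurve : HasDerivAt (fun s => x - (1 / 2) * g * s ^ 2) (-(g * t)) t :=
    ((hasDerivAt_pow 2 t).const_mul ((1 / 2) * g)).const_sub x |>.congr_deriv (by norm_num; ring)
  have h := hasDerivAt_mul_cexp_I_mul
    (hasDerivAt_uncurry_comp_s13 (hΨ _) hcurve (hasDerivAt_id' t))
    (hasDerivAt_accelPhase_time (hbar := hbar) (m := m) (g := g) x t)
  rw [one_smul] at h
  exact h

end AcceleratedFrame

/-- The equivalence-principle statement: if `Ψ` solves the free Schrödinger equation,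
then the wave function transformed to a uniformly accelerating frame,
`Ψ̃(x,t) = Ψ(x − ½gt², t) · exp((i m/hbar)(g·t·x − g²t³/6))`,
solves the Schrödinger equation with the uniform gravitational potential `−m·g·x`.
Functions of two variables are curried, `F x t`; `∂_t F (x,t) = deriv (F x) t`,
`∂_x F (x,t) = deriv (fun y => F y t) x`. -/
theorem free_schrodinger_accelerating_frame_gravity
    (hbar m g : ℝ) (hbar_pos : 0 < hbar) (hm : 0 < m)
    (Ψ : ℝ → ℝ → ℂ) (hΨ : ContDiff ℝ 2 (Function.uncurry Ψ))
    (hSE : ∀ x t, Complex.I * (hbar : ℂ) * deriv (fun s => Ψ x s) t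
        = -((hbar : ℂ) ^ 2 / (2 * (m : ℂ))) * deriv (deriv (fun y => Ψ y t)) x)
    (Ψt : ℝ → ℝ → ℂ)
    (hΨt : ∀ x t, Ψt x t = Ψ (x - (1 / 2) * g * t ^ 2) t
        * Complex.exp (Complex.I * ((m / hbar) *
            (g * t * x - (1 / 6) * g ^ 2 * t ^ 3) : ℝ))) :
    ∀ x t, Complex.I * (hbar : ℂ) * deriv (fun s => Ψt x s) t
        = -((hbar : ℂ) ^ 2 / (2 * (m : ℂ))) * deriv (deriv (fun y => Ψt y t)) x
          - ((m * g * x : ℝ) : ℂ) * Ψt x t := by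
  obtain rfl : Ψt = accelFrame hbar m g Ψ := funext fun x => funext (hΨt x)
  intro x t
  have hfree : I * hbar * deriv (Ψ (x - (1 / 2) * g * t ^ 2)) t
      = -((hbar : ℂ) ^ 2 / (2 * m)) * deriv (deriv fun y => Ψ y t) (x - (1 / 2) * g * t ^ 2) :=
    hSE _ _
  rw [(hasDerivAt_accelFrame_time (hΨ.differentiable (by norm_num)) x t).deriv,
    deriv_deriv_accelFrame_space hΨ, accelFrame]
  generalize deriv (fun y => Ψ y t) (x - (1 / 2) * g * t ^ 2) = Ψx at hfree ⊢
  generalize deriv (Ψ (x - (1 / 2) * g * t ^ 2)) t = Ψs at hfree ⊢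
  generalize deriv (deriv fun y => Ψ y t) (x - (1 / 2) * g * t ^ 2) = Ψxx at hfree ⊢
  generalize Ψ (x - (1 / 2) * g * t ^ 2) t = Ψ₀
  generalize exp _ = e
  have hbar0 : (hbar : ℂ) ≠ 0 := ofReal_ne_zero.2 hbar_pos.ne'
  have hm0 : (m : ℂ) ≠ 0 := ofReal_ne_zero.2 hm.ne'
  simp only [real_smul]
  push_cast
  field_simp at hfree ⊢
  linear_combination (hbar * e) * hfree + (m ^ 2 * g * (2 * x - g * t ^ 2) * Ψ₀ * e) * I_sq
end

section
/- Let ρ, φ : ℝ → ℝ be differentiable at x with ρ(x) > 0, let ħ > 0 and m > 0, and define Ψ : ℝ → ℂ by Ψ(y) = √(ρ(y)) · exp(i·φ(y)), the current velocity v(x) = (ħ/m)·φ'(x), and the osmotic velocity u(x) = −(ħ/(2m))·ρ'(x)/ρ(x). Then ħ²·‖Ψ'(x)‖² = ρ(x)·( m²·v(x)² + m²·u(x)² ). -/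
open Complex

/-! The derivative of a wave function in polar form `a · e^{iθ}` is `(a' + i a θ') e^{iθ}`, whose
modulus squared is `a'² + a² θ'²`. For `a = √ρ` the first term is `ρ'² / (4ρ)`, which is
`ρ · (m u / ħ)²`, and the second is `ρ φ'² = ρ · (m v / ħ)²`. -/

theorem HasDerivAt.ofReal_mul_cexp_I_mul {a θ : ℝ → ℝ} {a' θ' x : ℝ}
    (ha : HasDerivAt a a' x) (hθ : HasDerivAt θ θ' x) :
    HasDerivAt (fun y => (a y : ℂ) * cexp (I * (θ y : ℂ)))
      (((a' : ℂ) + (a x : ℂ) * θ' * I) * cexp (I * θ x)) x := by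
  have hphase : HasDerivAt (fun y => cexp (I * (θ y : ℂ))) (cexp (I * θ x) * (I * θ')) x :=
    (hθ.ofReal_comp.const_mul I).cexp
  exact (ha.ofReal_comp.fun_mul hphase).congr_deriv (by ring)

theorem norm_sq_deriv_ofReal_mul_cexp_I_mul {a θ : ℝ → ℝ} {x : ℝ}
    (ha : DifferentiableAt ℝ a x) (hθ : DifferentiableAt ℝ θ x) :
    ‖deriv (fun y => (a y : ℂ) * cexp (I * (θ y : ℂ))) x‖ ^ 2
      = deriv a x ^ 2 + (a x * deriv θ x) ^ 2 := by
  rw [(ha.hasDerivAt.ofReal_mul_cexp_I_mul hθ.hasDerivAt).deriv, norm_mul, mul_comm I,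
    norm_exp_ofReal_mul_I, mul_one, Complex.sq_norm, ← ofReal_mul, normSq_add_mul_I]

theorem momentum_squared_density_identity_general
    (ρ φ : ℝ → ℝ) (x : ℝ)
    (hρ : DifferentiableAt ℝ ρ x) (hφ : DifferentiableAt ℝ φ x)
    (hρx : 0 < ρ x) (hbar m : ℝ) (hm : 0 < m)
    (Ψ : ℝ → ℂ)
    (hΨ : ∀ y, Ψ y = (Real.sqrt (ρ y) : ℂ) * Complex.exp (Complex.I * (φ y : ℝ)))
    (v u : ℝ)
    (hv : v = (hbar / m) * deriv φ x)
    (hu : u = -(hbar / (2 * m)) * deriv ρ x / ρ x) :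
    hbar ^ 2 * ‖deriv Ψ x‖ ^ 2 = ρ x * (m ^ 2 * v ^ 2 + m ^ 2 * u ^ 2) := by
  have hsqrt : HasDerivAt (fun y => √(ρ y)) (deriv ρ x / (2 * √(ρ x))) x :=
    hρ.hasDerivAt.sqrt hρx.ne'
  have hnorm : ‖deriv Ψ x‖ ^ 2 = deriv ρ x ^ 2 / (4 * ρ x) + ρ x * deriv φ x ^ 2 := by
    rw [funext hΨ, norm_sq_deriv_ofReal_mul_cexp_I_mul hsqrt.differentiableAt hφ, hsqrt.deriv,
      div_pow, mul_pow, mul_pow, Real.sq_sqrt hρx.le]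
    ring
  rw [hnorm, hv, hu]
  field_simp
  ring

/-- Pointwise identity behind `⟨p̂²⟩ = m²⟨v²⟩ + m²⟨u²⟩`: for `Ψ = √ρ · exp(iφ)` with
`ρ(x) > 0`, current velocity `v = (hbar/m)·φ'` and osmotic velocity
`u = −(hbar/2m)·ρ'/ρ`, one has `hbar²·‖Ψ'(x)‖² = ρ(x)·(m²v(x)² + m²u(x)²)`. -/
theorem momentum_squared_density_identity
    (ρ φ : ℝ → ℝ) (x : ℝ)
    (hρ : DifferentiableAt ℝ ρ x) (hφ : DifferentiableAt ℝ φ x)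
    (hρx : 0 < ρ x) (hbar m : ℝ) (hbar_pos : 0 < hbar) (hm : 0 < m)
    (Ψ : ℝ → ℂ)
    (hΨ : ∀ y, Ψ y = (Real.sqrt (ρ y) : ℂ) * Complex.exp (Complex.I * (φ y : ℝ)))
    (v u : ℝ)
    (hv : v = (hbar / m) * deriv φ x)
    (hu : u = -(hbar / (2 * m)) * deriv ρ x / ρ x) :
    hbar ^ 2 * ‖deriv Ψ x‖ ^ 2 = ρ x * (m ^ 2 * v ^ 2 + m ^ 2 * u ^ 2) :=
  momentum_squared_density_identity_general ρ φ x hρ hφ hρx hbar m hm Ψ hΨ v u hv hu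
end
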